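/- arXiv:2012.07914 — 3 statements merged into one kernel-verified Lean document; each statement's English description precedes it below -/
import Mathlib

section
/- Let A ⊆ ℝ[x₁,…,x_n] be a subalgebra containing r² = x₁²+⋯+x_n² and preserved by the Laplacian Δ = Σ ∂²/∂xᵢ². Then A is graded: A = ⊕_d (A ∩ ℝ[V]_d), where ℝ[V]_d is the space of homogeneous polynomials of degree d. -/
/-!
Writing `E = Σᵢ xᵢ ∂ᵢ` for the Euler operator, the identity `Δ(r² f) = 2n f + 4 E f + r² Δf`
shows that a Laplacian algebra is stable under `E`. By Euler's identity the homogeneous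
components of `f` are eigenvectors of `E` for the distinct eigenvalues `0, 1, 2, …`, and a
subspace stable under an operator contains the eigencomponents of each of its elements.
-/

open MvPolynomial

/-- The Laplacian Δ = Σᵢ ∂²/∂xᵢ². -/
noncomputable def lap {n : ℕ} (f : MvPolynomial (Fin n) ℝ) : MvPolynomial (Fin n) ℝ :=
  ∑ i, pderiv i (pderiv i f)

/-- ⟨∇f, ∇g⟩ = Σᵢ (∂f/∂xᵢ)(∂g/∂xᵢ). -/
noncomputable def gradInner {n : ℕ} (f g : MvPolynomial (Fin n) ℝ) :
    MvPolynomial (Fin n) ℝ :=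
  ∑ i, pderiv i f * pderiv i g

/-- r² = x₁² + ⋯ + xₙ². -/
noncomputable def rsq {n : ℕ} : MvPolynomial (Fin n) ℝ := ∑ i, X i ^ 2

theorem Submodule.mem_of_sum_eigenvectors_mem {K V ι : Type*} [Field K] [AddCommGroup V]
    [Module K V] {p : Submodule K V} {f : Module.End K V} (hp : ∀ x ∈ p, f x ∈ p)
    {s : Finset ι} {μ : ι → K} (hμ : Set.InjOn μ s) {v : ι → V}
    (hv : ∀ i ∈ s, f (v i) = μ i • v i) (hsum : ∑ i ∈ s, v i ∈ p) : ∀ i ∈ s, v i ∈ p := by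
  classical
  induction s using Finset.induction_on generalizing v with
  | empty => simp
  | insert a s ha ih =>
    rw [Finset.coe_insert] at hμ
    have hμa : ∀ i ∈ s, μ i - μ a ≠ 0 := fun i hi => sub_ne_zero.mpr <|
      hμ.ne (Set.mem_insert_of_mem _ hi) (Set.mem_insert _ _) (ne_of_mem_of_not_mem hi ha)
    -- `f - μ a` kills `v a` and rescales the other eigenvectors by `μ i - μ a ≠ 0`.
    have hshift : ∑ i ∈ s, (μ i - μ a) • v i ∈ p := by
      have := p.sub_mem (hp _ hsum) (p.smul_mem (μ a) hsum)
      convert this using 1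
      rw [Finset.sum_insert ha, map_add, map_sum, hv a (Finset.mem_insert_self a s),
        Finset.sum_congr rfl fun i hi => hv i (Finset.mem_insert_of_mem hi)]
      simp only [sub_smul, Finset.sum_sub_distrib, Finset.smul_sum, smul_add]
      abel
    have hs : ∀ i ∈ s, v i ∈ p := by
      intro i hi
      have := ih (hμ.mono (Set.subset_insert _ _)) (v := fun i => (μ i - μ a) • v i)
        (fun j hj => by rw [map_smul, hv j (Finset.mem_insert_of_mem hj), smul_comm]) hshift i hi
      simpa [smul_smul, inv_mul_cancel₀ (hμa i hi)] using p.smul_mem (μ i - μ a)⁻¹ this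
    intro i hi
    rcases Finset.mem_insert.mp hi with rfl | hi
    · rw [Finset.sum_insert ha] at hsum
      simpa using p.sub_mem hsum (p.sum_mem hs)
    · exact hs i hi

namespace MvPolynomial

variable {σ R : Type*} [Fintype σ] [CommSemiring R]

noncomputable def euler : Module.End R (MvPolynomial σ R) :=
  ∑ i, LinearMap.mulLeft R (X i) ∘ₗ (pderiv i).toLinearMap

theorem euler_apply (f : MvPolynomial σ R) : euler f = ∑ i, X i * pderiv i f := by
  simp [euler]

theorem IsHomogeneous.euler_eq {f : MvPolynomial σ R} {d : ℕ} (hf : f.IsHomogeneous d) :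
    euler f = (d : R) • f := by
  rw [euler_apply, hf.sum_X_mul_pderiv, Nat.cast_smul_eq_nsmul]

end MvPolynomial

theorem pderiv_rsq {n : ℕ} (i : Fin n) : pderiv i (rsq (n := n)) = 2 * X i := by
  rw [rsq, map_sum, Finset.sum_eq_single i]
  · simp
  · intro j _ hj; simp [pderiv_X_of_ne hj]
  · simp

theorem lap_rsq_mul {n : ℕ} (f : MvPolynomial (Fin n) ℝ) :
    lap (rsq * f) = (2 * n : ℝ) • f + (4 : ℝ) • euler f + rsq * lap f := by
  have hi : ∀ i : Fin n, pderiv i (pderiv i (rsq * f)) =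
      2 * f + 4 * (X i * pderiv i f) + rsq * pderiv i (pderiv i f) := by
    intro i
    have h2 : pderiv i (2 : MvPolynomial (Fin n) ℝ) = 0 := by
      simpa using (pderiv i).map_natCast 2
    simp only [Derivation.leibniz, pderiv_rsq, map_add, smul_eq_mul, pderiv_X_self, h2]
    ring
  simp only [lap, hi, Finset.sum_add_distrib, ← Finset.mul_sum, euler_apply]
  simp only [Finset.sum_const, Finset.card_univ, Fintype.card_fin, nsmul_eq_mul, smul_eq_C_mul,
    map_mul, map_natCast, map_ofNat]
  ring

theorem euler_mem_of_laplacian {n : ℕ} {A : Subalgebra ℝ (MvPolynomial (Fin n) ℝ)}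
    (hr : rsq ∈ A) (hΔ : ∀ f ∈ A, lap f ∈ A) {f : MvPolynomial (Fin n) ℝ} (hf : f ∈ A) :
    euler f ∈ A := by
  have h : euler f = (4 : ℝ)⁻¹ • (lap (rsq * f) - (2 * n : ℝ) • f - rsq * lap f) := by
    rw [lap_rsq_mul, eq_inv_smul_iff₀ four_ne_zero]
    abel
  rw [h]
  exact A.smul_mem (A.sub_mem (A.sub_mem (hΔ _ (A.mul_mem hr hf)) (A.smul_mem hf _))
    (A.mul_mem hr (hΔ f hf))) _

/-- A Laplacian subalgebra (containing r² and preserved by Δ) is graded: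
it contains every homogeneous component of each of its elements. -/
theorem laplacian_algebra_graded {n : ℕ}
    (A : Subalgebra ℝ (MvPolynomial (Fin n) ℝ))
    (hr : rsq ∈ A) (hΔ : ∀ f ∈ A, lap f ∈ A) :
    ∀ f ∈ A, ∀ d : ℕ, homogeneousComponent d f ∈ A := by
  intro f hf d
  have hcomponents := Submodule.mem_of_sum_eigenvectors_mem (p := Subalgebra.toSubmodule A)
    (fun g hg => euler_mem_of_laplacian hr hΔ hg)
    (s := Finset.range (f.totalDegree + 1)) (μ := fun e => (e : ℝ)) Nat.cast_injective.injOn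
    (fun e _ => (homogeneousComponent_isHomogeneous e f).euler_eq)
    (by rwa [sum_homogeneousComponent])
  by_cases hd : d ≤ f.totalDegree
  · exact hcomponents d (Finset.mem_range.mpr (Nat.lt_succ_of_le hd))
  · rw [homogeneousComponent_eq_zero d f (not_le.mp hd)]
    exact A.zero_mem
end

section
/- Let A ⊆ ℝ[V] be a graded subalgebra (i.e., closed under taking homogeneous components). Then the algebra B of all polynomials constant on every equivalence class of ∼_A is also graded, where x ∼_A y iff f(x) = f(y) for all f ∈ A. -/
/-!
Restricting a polynomial `f` to the line through a point `x` gives the univariate polynomial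
`t ↦ f (t • x)`, whose `d`-th coefficient is the value at `x` of the degree-`d` homogeneous
component of `f`. If `A` is graded and `x ∼_A y`, then `A` cannot separate `t • x` from `t • y`
for any `t`, since all homogeneous components of an element of `A` agree at `x` and `y`. So `f`
agrees on the two lines, and comparing coefficients of the restrictions shows that every
homogeneous component of `f` takes the same value at `x` and at `y`.
-/

open MvPolynomial

namespace MvPolynomial

variable {σ R : Type*} [CommSemiring R]

noncomputable def restrictToLine (x : σ → R) (p : MvPolynomial σ R) : Polynomial R :=
  aeval (fun i => Polynomial.C (x i) * Polynomial.X) p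

theorem eval_restrictToLine (x : σ → R) (p : MvPolynomial σ R) (t : R) :
    (restrictToLine x p).eval t = eval (t • x) p := by
  rw [restrictToLine, ← Polynomial.coe_aeval_eq_eval, comp_aeval_apply, ← aeval_eq_eval]
  congr 2
  funext i
  rw [map_mul, Polynomial.aeval_C, Polynomial.aeval_X, Pi.smul_apply, smul_eq_mul, mul_comm]
  rfl

theorem restrictToLine_monomial (x : σ → R) (m : σ →₀ ℕ) (c : R) :
    restrictToLine x (monomial m c) =
      Polynomial.C (eval x (monomial m c)) * Polynomial.X ^ m.degree := by
  simp only [restrictToLine, aeval_monomial, eval_monomial, mul_pow, Finsupp.prod_mul,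
    Finsupp.degree_apply]
  simp [Finsupp.prod, Finset.prod_pow_eq_pow_sum, Polynomial.C_mul, mul_assoc]

theorem coeff_restrictToLine (x : σ → R) (p : MvPolynomial σ R) (d : ℕ) :
    (restrictToLine x p).coeff d = eval x (homogeneousComponent d p) := by
  induction p using MvPolynomial.induction_on' with
  | monomial m c =>
    rw [restrictToLine_monomial, Polynomial.coeff_C_mul_X_pow,
      homogeneousComponent_of_mem (isHomogeneous_monomial c rfl)]
    split_ifs <;> simp_all
  | add p q hp hq =>
    rw [restrictToLine, map_add, Polynomial.coeff_add, map_add, map_add]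
    exact congrArg₂ (· + ·) hp hq

theorem restrictToLine_eq_iff {x y : σ → R} {p : MvPolynomial σ R} :
    restrictToLine x p = restrictToLine y p ↔
      ∀ d, eval x (homogeneousComponent d p) = eval y (homogeneousComponent d p) := by
  simp only [Polynomial.ext_iff, coeff_restrictToLine]

end MvPolynomial

/-- If A is a graded subalgebra of ℝ[V], then the algebra of all polynomials
constant on every equivalence class of ∼_A is also graded. -/
theorem basic_of_graded_is_graded {n : ℕ}
    (A : Subalgebra ℝ (MvPolynomial (Fin n) ℝ))
    (hA : ∀ f ∈ A, ∀ d : ℕ, homogeneousComponent d f ∈ A)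
    (f : MvPolynomial (Fin n) ℝ)
    (hf : ∀ x y : Fin n → ℝ, (∀ a ∈ A, eval x a = eval y a) →
      eval x f = eval y f) :
    ∀ d : ℕ, ∀ x y : Fin n → ℝ, (∀ a ∈ A, eval x a = eval y a) →
      eval x (homogeneousComponent d f) = eval y (homogeneousComponent d f) := by
  intro d x y hxy
  have hA_line : ∀ a ∈ A, restrictToLine x a = restrictToLine y a := fun a ha =>
    restrictToLine_eq_iff.2 fun e => hxy _ (hA a ha e)
  have hf_line : restrictToLine x f = restrictToLine y f := by
    refine Polynomial.funext fun t => ?_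
    rw [eval_restrictToLine, eval_restrictToLine]
    refine hf _ _ fun a ha => ?_
    rw [← eval_restrictToLine, ← eval_restrictToLine, hA_line a ha]
  exact restrictToLine_eq_iff.1 hf_line d
end

section
/- The functions f_{ij}(v₁,…,v_k) = ⟨vᵢ,vⱼ⟩ separate the orbits of the diagonal action of O(n) on (ℝ^n)^k: if (v₁,…,v_k) and (w₁,…,w_k) satisfy ⟨vᵢ,vⱼ⟩ = ⟨wᵢ,wⱼ⟩ for all i,j, then there exists g ∈ O(n) with g·vᵢ = wᵢ for all i. -/
/-! If the vectors `vᵢ` and `wᵢ` have the same Gram matrix, then `‖∑ cᵢ wᵢ‖ = ‖∑ cᵢ vᵢ‖` for all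
coefficients `c`. Hence `∑ cᵢ vᵢ ↦ ∑ cᵢ wᵢ` is a well-defined linear isometry on the span of the
`vᵢ`, and in finite dimension a linear isometry defined on a subspace extends to the whole space. -/

theorem LinearMap.exists_linearIsometry_range_apply_eq {𝕜 M E F : Type*} [RCLike 𝕜]
    [AddCommGroup M] [Module 𝕜 M] [NormedAddCommGroup E] [InnerProductSpace 𝕜 E]
    [NormedAddCommGroup F] [InnerProductSpace 𝕜 F] (T : M →ₗ[𝕜] E) (T' : M →ₗ[𝕜] F)
    (h : ∀ x, ‖T' x‖ = ‖T x‖) :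
    ∃ L : range T →ₗᵢ[𝕜] F, ∀ x, L ⟨T x, mem_range_self T x⟩ = T' x := by
  have hker : ker T ≤ ker T' := fun x hx => by
    rwa [mem_ker, ← norm_eq_zero, h, norm_eq_zero]
  let L : range T →ₗ[𝕜] F := (ker T).liftQ T' hker ∘ₗ T.quotKerEquivRange.symm.toLinearMap
  have hL : ∀ x, L ⟨T x, mem_range_self T x⟩ = T' x := fun x => by simp [L]
  refine ⟨⟨L, ?_⟩, hL⟩
  rintro ⟨_, x, rfl⟩
  rw [hL, h, Submodule.coe_norm]

theorem norm_linearCombination_eq_of_inner_eq {𝕜 ι E F : Type*} [RCLike 𝕜] [Fintype ι]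
    [NormedAddCommGroup E] [InnerProductSpace 𝕜 E]
    [NormedAddCommGroup F] [InnerProductSpace 𝕜 F] {v : ι → E} {w : ι → F}
    (h : ∀ i j, inner 𝕜 (v i) (v j) = inner 𝕜 (w i) (w j)) (c : ι → 𝕜) :
    ‖Fintype.linearCombination 𝕜 w c‖ = ‖Fintype.linearCombination 𝕜 v c‖ := by
  have hinner : inner 𝕜 (Fintype.linearCombination 𝕜 w c) (Fintype.linearCombination 𝕜 w c)
      = inner 𝕜 (Fintype.linearCombination 𝕜 v c) (Fintype.linearCombination 𝕜 v c) := by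
    simp only [Fintype.linearCombination_apply, sum_inner, inner_sum, inner_smul_left,
      inner_smul_right, h]
  rw [@norm_eq_sqrt_re_inner 𝕜, @norm_eq_sqrt_re_inner 𝕜, hinner]

theorem exists_linearIsometryEquiv_apply_eq_of_inner_eq {𝕜 ι V : Type*} [RCLike 𝕜] [Fintype ι]
    [NormedAddCommGroup V] [InnerProductSpace 𝕜 V] [FiniteDimensional 𝕜 V] {v w : ι → V}
    (h : ∀ i j, inner 𝕜 (v i) (v j) = inner 𝕜 (w i) (w j)) :
    ∃ g : V ≃ₗᵢ[𝕜] V, ∀ i, g (v i) = w i := by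
  classical
  obtain ⟨L, hL⟩ := (Fintype.linearCombination 𝕜 v).exists_linearIsometry_range_apply_eq
    (Fintype.linearCombination 𝕜 w) (norm_linearCombination_eq_of_inner_eq h)
  refine ⟨L.extend.toLinearIsometryEquiv rfl, fun i => ?_⟩
  have hvi := hL (Pi.single i 1)
  simp only [Fintype.linearCombination_apply_single, one_smul] at hvi
  rw [LinearIsometry.coe_toLinearIsometryEquiv]
  exact (L.extend_apply _).trans hvi

/-- Separation part of Weyl's FFT for O(n): if two k-tuples of vectors in ℝⁿ
have equal pairwise inner products, they differ by an orthogonal map. -/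
theorem orthogonal_orbit_separation {n k : ℕ}
    (v w : Fin k → EuclideanSpace ℝ (Fin n))
    (h : ∀ i j, inner ℝ (v i) (v j) = (inner ℝ (w i) (w j) : ℝ)) :
    ∃ g : EuclideanSpace ℝ (Fin n) ≃ₗᵢ[ℝ] EuclideanSpace ℝ (Fin n),
      ∀ i, g (v i) = w i :=
  exists_linearIsometryEquiv_apply_eq_of_inner_eq h
end
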